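/- arXiv:2503.04080 — 5 statements merged into one kernel-verified Lean document; each statement's English description precedes it below -/
import Mathlib

section
/- For any non-negative integer $n$, $\sum_{j=0}^{n+1} (-1)^j \frac{(n+1)!\,(n+2)!}{(j+1)!\,(n+1-j)!} = (n+1)!$. -/
open Finset

theorem sum_range_neg_one_pow_mul_choose_succ {R : Type*} [Ring R] {m : ℕ} (hm : m ≠ 0) :
    ∑ j ∈ range m, (-1 : R) ^ j * m.choose (j + 1) = 1 := by
  have h := congrArg (Int.cast : ℤ → R) (Int.alternating_sum_range_choose_of_ne hm)
  push_cast at h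
  rw [sum_range_succ'] at h
  simp only [pow_succ, mul_neg_one, neg_mul, sum_neg_distrib, pow_zero, Nat.choose_zero_right,
    Nat.cast_one, mul_one] at h
  exact neg_add_eq_zero.mp h

theorem stmt_1 (n : ℕ) :
    ∑ j ∈ Finset.range (n + 2),
      ((-1 : ℚ) ^ j) * ((Nat.factorial (n + 1)) * (Nat.factorial (n + 2))) /
        ((Nat.factorial (j + 1)) * (Nat.factorial (n + 1 - j)))
      = (Nat.factorial (n + 1) : ℚ) := by
  calc _ = ∑ j ∈ range (n + 2),
          ((n + 1).factorial : ℚ) * ((-1) ^ j * (n + 2).choose (j + 1)) := by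
        refine sum_congr rfl fun j hj => ?_
        rw [Nat.cast_choose ℚ (mem_range.mp hj), show n + 2 - (j + 1) = n + 1 - j by omega]
        ring
    _ = (n + 1).factorial := by
        rw [← mul_sum, sum_range_neg_one_pow_mul_choose_succ (by omega), mul_one]
end

section
/- Let $A$ be a commutative $\mathbb{Q}$-algebra, $D : A \to A$ a derivation, and $E, \Lambda \in A$ with $D E = \Lambda + E^2$. Define $\partial E := \Lambda - E^2$ (equivalently $\partial E = DE - 2E^2$), set $\partial_{(0)} E := E$, $\partial_{(1)} E := \Lambda - E^2$, and $\partial_{(j+1)} E := \partial(\partial_{(j)} E) + j(j+1)\Lambda\,\partial_{(j-1)} E$, where $\partial(\partial_{(j)} E) := D(\partial_{(j)} E) - (2+2j) E\,\partial_{(j)} E$. Then for all $n \ge 0$: $\partial_{(n)} E = \Psi_n + (-1)^n n!\, E^{n+1}$, where $\Psi_0 := 0$, $\Psi_1 := \Lambda$, and $\Psi_{j+1} := \partial \Psi_j + j(j+1)\Lambda \Psi_{j-1}$ with $\partial \Psi_j := D\Psi_j - (2j+2)E\Psi_j$ (note: since $\Psi_j$ depends only on $\Lambda$ and its Serre-type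 derivatives, $\partial \Psi_j$ is the weight-$(2j+2)$ twisted derivative). -/
/-!
Both `SE` and `Ψ` obey the same recursion, which is linear in the pair of previous terms.
Since `D (E ^ (k + 1)) = (k + 1) • E ^ k * (Λ + E ^ 2)`, the sequence `(-1) ^ n * n! • E ^ (n + 1)`
obeys it too: the `Λ`-terms coming from `D` cancel the `Λ`-term of the recursion. Adding it to `Ψ`
gives a solution with the initial values `E` and `Λ - E ^ 2` of `SE`.
-/

section

variable {A : Type*} [CommRing A] [Algebra ℚ A] (D : Derivation ℚ A A) (E Λ : A)

def serreRecStep (j : ℕ) (x y : A) : A :=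
  (D y - (2 * (j + 1 : ℕ) + 2 : ℚ) • (E * y)) + (((j + 1 : ℕ) * ((j + 1 : ℕ) + 1) : ℚ) • (Λ * x))

theorem serreRecStep_add (j : ℕ) (x x' y y' : A) :
    serreRecStep D E Λ j (x + x') (y + y') =
      serreRecStep D E Λ j x y + serreRecStep D E Λ j x' y' := by
  simp only [serreRecStep, map_add, mul_add, smul_add]
  abel

theorem serreRecStep_signed_factorial_pow (hDE : D E = Λ + E ^ 2) (j : ℕ) :
    serreRecStep D E Λ j (((-1 : ℚ) ^ j * j.factorial) • E ^ (j + 1))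
        (((-1 : ℚ) ^ (j + 1) * (j + 1).factorial) • E ^ (j + 1 + 1)) =
      ((-1 : ℚ) ^ (j + 2) * (j + 2).factorial) • E ^ (j + 2 + 1) := by
  rw [serreRecStep, D.map_smul, Derivation.leibniz_pow, hDE, smul_eq_mul, nsmul_eq_mul]
  simp only [Algebra.smul_def, map_mul, map_pow, map_neg, map_one, map_add, map_natCast,
    map_ofNat, Nat.factorial_succ]
  push_cast
  ring

end

theorem stmt_3 {A : Type*} [CommRing A] [Algebra ℚ A]
    (D : Derivation ℚ A A) (E Λ : A)
    (hDE : D E = Λ + E ^ 2)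
    (SE : ℕ → A) (Ψ : ℕ → A)
    (hSE0 : SE 0 = E)
    (hSE1 : SE 1 = Λ - E ^ 2)
    (hSErec : ∀ j : ℕ, SE (j + 2) =
      (D (SE (j + 1)) - (2 + 2 * (j + 1 : ℕ) : ℚ) • (E * SE (j + 1)))
        + (((j + 1 : ℕ) * ((j + 1 : ℕ) + 1) : ℚ) • (Λ * SE j)))
    (hΨ0 : Ψ 0 = 0)
    (hΨ1 : Ψ 1 = Λ)
    (hΨrec : ∀ j : ℕ, Ψ (j + 2) =
      (D (Ψ (j + 1)) - (2 * (j + 1 : ℕ) + 2 : ℚ) • (E * Ψ (j + 1)))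
        + (((j + 1 : ℕ) * ((j + 1 : ℕ) + 1) : ℚ) • (Λ * Ψ j)))
    (n : ℕ) :
    SE n = Ψ n + ((-1 : ℚ) ^ n * (Nat.factorial n : ℚ)) • E ^ (n + 1) := by
  induction n using Nat.twoStepInduction with
  | zero => simp [hSE0, hΨ0]
  | one => simp [hSE1, hΨ1, sub_eq_add_neg]
  | more j ih0 ih1 =>
    have hSE : SE (j + 2) = serreRecStep D E Λ j (SE j) (SE (j + 1)) := by
      rw [hSErec, serreRecStep, add_comm (2 : ℚ)]
    have hΨ : Ψ (j + 2) = serreRecStep D E Λ j (Ψ j) (Ψ (j + 1)) := hΨrec j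
    rw [hSE, hΨ, ih0, ih1, serreRecStep_add, serreRecStep_signed_factorial_pow D E Λ hDE]
end

section
/- Let $A$ be a commutative $\mathbb{Q}$-algebra, $D$ a derivation on $A$, and $E, \Lambda \in A$ with $D E = \Lambda + E^2$. With $\Psi_n$ defined as before ($\Psi_0 = 0$, $\Psi_1 = \Lambda$, $\Psi_{j+1} = D\Psi_j - (2j+2)E\Psi_j + j(j+1)\Lambda\Psi_{j-1}$), for every non-negative integer $n$: $D^{n+1} E = \sum_{j=0}^{n+1} \frac{(n+1)!\,(n+2)!}{j!\,(j+1)!\,(n+1-j)!}\, E^{n+1-j}\, \Psi_j + (n+1)!\, E^{n+2}$. -/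
/-!
Induction on `n`. Differentiating `E ^ k * Ψ (i + 1)` with `D E = Λ + E ^ 2` and the recursion
for `Ψ` gives four kinds of terms. The `Λ`-terms produced by `D (E ^ k)` cancel against the terms
`-(i + 1) (i + 2) Λ Ψ i` of the recursion, and the remaining ones reassemble into the formula for
the next derivative thanks to `(i + k + 1) (i + k + 2) = k (k + 2i + 3) + (i + 1) (i + 2)`, the
derivative of `(n + 1)! E ^ (n + 2)` supplying the missing term `Λ E ^ (n + 1) = E ^ (n + 1) Ψ 1`.
-/

open Finset Nat

namespace RiccatiIterate

/-- The paper's coefficient of `E ^ (n + 1 - j) Ψ j`, reindexed by `j = i + 1`, `k = n + 1 - j`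
(the term `j = 0` vanishes since `Ψ 0 = 0`). -/
def coeff (i k : ℕ) : ℚ :=
  ((i + k + 1)! * (i + k + 2)! : ℚ) / ((i + 1)! * (i + 2)! * k !)

lemma coeff_succ_right (i k : ℕ) :
    coeff i (k + 1) * (k + 1) = coeff i k * ((i + k + 2) * (i + k + 3)) := by
  simp only [coeff, show i + (k + 1) + 1 = i + k + 1 + 1 by ring,
    show i + (k + 1) + 2 = i + k + 2 + 1 by ring, factorial_succ (i + k + 1),
    factorial_succ (i + k + 2), factorial_succ k]
  push_cast
  field_simp
  ring

lemma coeff_succ_left (i k : ℕ) :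
    coeff (i + 1) k * ((i + 2) * (i + 3)) = coeff i k * ((i + k + 2) * (i + k + 3)) := by
  simp only [coeff, show i + 1 + k + 1 = i + k + 1 + 1 by ring,
    show i + 1 + k + 2 = i + k + 2 + 1 by ring, show i + 1 + 2 = i + 2 + 1 by ring,
    factorial_succ (i + k + 1), factorial_succ (i + k + 2), factorial_succ (i + 2),
    factorial_succ (i + 1)]
  push_cast
  field_simp
  ring

/-- Splitting `coeff` along `(i + k + 1) (i + k + 2) = k (k + 2i + 3) + (i + 1) (i + 2)` separates
the contribution of `D (E ^ k)` from that of the shift `Ψ i ↦ Ψ (i + 1)`. -/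
def coeffE (i k : ℕ) : ℚ :=
  coeff i k * (k * (k + 2 * i + 3)) / ((i + k + 1) * (i + k + 2))

def coeffΨ (i k : ℕ) : ℚ :=
  coeff i k * ((i + 1) * (i + 2)) / ((i + k + 1) * (i + k + 2))

lemma coeffE_add_coeffΨ (i k : ℕ) : coeffE i k + coeffΨ i k = coeff i k := by
  unfold coeffE coeffΨ
  field_simp
  ring

lemma coeffE_zero_right (i : ℕ) : coeffE i 0 = 0 := by
  simp [coeffE]

lemma coeffE_succ_right (i k : ℕ) : coeffE i (k + 1) = coeff i k * (k + 2 * i + 4) := by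
  have := coeff_succ_right i k
  unfold coeffE
  push_cast
  field_simp
  linear_combination (k + 2 * i + 4 : ℚ) * this

lemma coeffΨ_succ_left (i k : ℕ) : coeffΨ (i + 1) k = coeff i k := by
  have := coeff_succ_left i k
  unfold coeffΨ
  push_cast
  field_simp
  linear_combination this

lemma coeffΨ_zero_left (k : ℕ) : coeffΨ 0 k = (k + 1)! := by
  simp only [coeffΨ, coeff, zero_add, factorial_succ (k + 1), factorial_succ k,
    factorial_one, factorial_two]
  push_cast
  field_simp
  ring

variable {A : Type*} [CommRing A] [Algebra ℚ A] (D : Derivation ℚ A A) {E Λ : A} {Ψ : ℕ → A}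

lemma deriv_pow_of_deriv_eq (hDE : D E = Λ + E ^ 2) (k : ℕ) :
    D (E ^ k) = (k : ℚ) • (Λ * E ^ (k - 1)) + (k : ℚ) • E ^ (k + 1) := by
  rw [D.leibniz_pow, hDE]
  rcases k with _ | k
  · simp
  · rw [add_tsub_cancel_right, ← Nat.cast_smul_eq_nsmul ℚ, smul_eq_mul, ← smul_add, mul_add,
      ← pow_add, mul_comm]

lemma deriv_psi_succ_of_rec
    (hΨrec : ∀ j : ℕ, Ψ (j + 2) =
      (D (Ψ (j + 1)) - (2 * (j + 1 : ℕ) + 2 : ℚ) • (E * Ψ (j + 1)))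
        + (((j + 1 : ℕ) * ((j + 1 : ℕ) + 1) : ℚ) • (Λ * Ψ j))) (i : ℕ) :
    D (Ψ (i + 1)) = Ψ (i + 2) + (2 * i + 4 : ℚ) • (E * Ψ (i + 1))
      - ((i + 1) * (i + 2) : ℚ) • (Λ * Ψ i) := by
  rw [hΨrec i]
  push_cast
  module

lemma deriv_pow_mul_psi_succ (hDE : D E = Λ + E ^ 2)
    (hDΨ : ∀ i : ℕ, D (Ψ (i + 1)) = Ψ (i + 2) + (2 * i + 4 : ℚ) • (E * Ψ (i + 1))
      - ((i + 1) * (i + 2) : ℚ) • (Λ * Ψ i)) (i k : ℕ) :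
    D (E ^ k * Ψ (i + 1)) =
      (k + 2 * i + 4 : ℚ) • (E ^ (k + 1) * Ψ (i + 1)) + E ^ k * Ψ (i + 2)
        + ((k : ℚ) • (Λ * E ^ (k - 1) * Ψ (i + 1))
          - ((i + 1) * (i + 2) : ℚ) • (Λ * E ^ k * Ψ i)) := by
  rw [D.leibniz, hDΨ, deriv_pow_of_deriv_eq D hDE, smul_eq_mul, smul_eq_mul]
  simp only [Algebra.smul_def, map_add, map_mul, map_ofNat, map_natCast, map_one]
  ring

lemma sum_coeff_lambda_terms (hΨ0 : Ψ 0 = 0) (n : ℕ) :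
    ∑ p ∈ antidiagonal n, (coeff p.1 p.2 * p.2) • (Λ * E ^ (p.2 - 1) * Ψ (p.1 + 1)) =
      ∑ p ∈ antidiagonal n,
        (coeff p.1 p.2 * ((p.1 + 1) * (p.1 + 2))) • (Λ * E ^ p.2 * Ψ p.1) := by
  rcases n with _ | n
  · simp [hΨ0]
  rw [Nat.sum_antidiagonal_succ', Nat.sum_antidiagonal_succ]
  simp only [CharP.cast_eq_zero, mul_zero, zero_smul, hΨ0, smul_zero, zero_add,
    add_tsub_cancel_right]
  refine sum_congr rfl fun p _ => ?_
  push_cast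
  rw [coeff_succ_right, ← coeff_succ_left]
  ring_nf

lemma sum_coeff_succ (hΨ1 : Ψ 1 = Λ) (n : ℕ) :
    ∑ p ∈ antidiagonal (n + 1), coeff p.1 p.2 • (E ^ p.2 * Ψ (p.1 + 1)) =
      ∑ p ∈ antidiagonal n,
          (coeff p.1 p.2 * (p.2 + 2 * p.1 + 4)) • (E ^ (p.2 + 1) * Ψ (p.1 + 1))
        + ∑ p ∈ antidiagonal n, coeff p.1 p.2 • (E ^ p.2 * Ψ (p.1 + 2))
        + ((n + 2)! : ℚ) • (Λ * E ^ (n + 1)) := by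
  conv_lhs =>
    simp only [← coeffE_add_coeffΨ, add_smul, sum_add_distrib]
    rw [Nat.sum_antidiagonal_succ', Nat.sum_antidiagonal_succ (f := fun p => _ • _)]
    simp only [coeffE_zero_right, coeffE_succ_right, coeffΨ_zero_left, coeffΨ_succ_left, hΨ1,
      zero_smul, zero_add, mul_comm _ Λ]
  abel

def closedForm (E : A) (Ψ : ℕ → A) (n : ℕ) : A :=
  ∑ p ∈ antidiagonal n, coeff p.1 p.2 • (E ^ p.2 * Ψ (p.1 + 1)) + ((n + 1)! : ℚ) • E ^ (n + 2)

lemma deriv_closedForm (hDE : D E = Λ + E ^ 2) (hΨ0 : Ψ 0 = 0) (hΨ1 : Ψ 1 = Λ)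
    (hDΨ : ∀ i : ℕ, D (Ψ (i + 1)) = Ψ (i + 2) + (2 * i + 4 : ℚ) • (E * Ψ (i + 1))
      - ((i + 1) * (i + 2) : ℚ) • (Λ * Ψ i)) (n : ℕ) :
    D (closedForm E Ψ n) = closedForm E Ψ (n + 1) := by
  have htop : D (((n + 1)! : ℚ) • E ^ (n + 2)) =
      ((n + 2)! : ℚ) • (Λ * E ^ (n + 1)) + ((n + 2)! : ℚ) • E ^ (n + 3) := by
    rw [D.map_smul, deriv_pow_of_deriv_eq D hDE, factorial_succ (n + 1)]
    push_cast
    module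
  rw [closedForm, closedForm, map_add, map_sum, htop, sum_coeff_succ hΨ1]
  simp only [D.map_smul, deriv_pow_mul_psi_succ D hDE hDΨ, smul_add, smul_sub, smul_smul,
    sum_add_distrib, sum_sub_distrib, sum_coeff_lambda_terms hΨ0]
  abel

lemma iterate_deriv_eq_closedForm (hDE : D E = Λ + E ^ 2) (hΨ0 : Ψ 0 = 0) (hΨ1 : Ψ 1 = Λ)
    (hDΨ : ∀ i : ℕ, D (Ψ (i + 1)) = Ψ (i + 2) + (2 * i + 4 : ℚ) • (E * Ψ (i + 1))
      - ((i + 1) * (i + 2) : ℚ) • (Λ * Ψ i)) (n : ℕ) :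
    D^[n + 1] E = closedForm E Ψ n := by
  induction n with
  | zero => simp [closedForm, coeff, hDE, hΨ1]
  | succ n ih => rw [Function.iterate_succ_apply', ih, deriv_closedForm D hDE hΨ0 hΨ1 hDΨ]

lemma closedForm_eq_sum_range (hΨ0 : Ψ 0 = 0) (n : ℕ) :
    closedForm E Ψ n =
      ∑ j ∈ range (n + 2), (((n + 1)! * (n + 2)! : ℚ) / (j ! * (j + 1)! * (n + 1 - j)!)) •
          (E ^ (n + 1 - j) * Ψ j)
        + ((n + 1)! : ℚ) • E ^ (n + 2) := by
  rw [closedForm,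
    Nat.sum_antidiagonal_eq_sum_range_succ (fun i k => coeff i k • (E ^ k * Ψ (i + 1))),
    sum_range_succ' _ (n + 1)]
  simp only [hΨ0, mul_zero, smul_zero, add_zero]
  congr 1
  refine sum_congr rfl fun i hi => ?_
  obtain ⟨k, rfl⟩ := Nat.exists_eq_add_of_le (mem_range_succ_iff.mp hi)
  simp only [coeff, Nat.add_sub_cancel_left, show i + k + 1 - (i + 1) = k by omega]

end RiccatiIterate

theorem stmt_4 {A : Type*} [CommRing A] [Algebra ℚ A]
    (D : Derivation ℚ A A) (E Λ : A)
    (hDE : D E = Λ + E ^ 2)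
    (Ψ : ℕ → A)
    (hΨ0 : Ψ 0 = 0)
    (hΨ1 : Ψ 1 = Λ)
    (hΨrec : ∀ j : ℕ, Ψ (j + 2) =
      (D (Ψ (j + 1)) - (2 * (j + 1 : ℕ) + 2 : ℚ) • (E * Ψ (j + 1)))
        + (((j + 1 : ℕ) * ((j + 1 : ℕ) + 1) : ℚ) • (Λ * Ψ j)))
    (n : ℕ) :
    (⇑D)^[n + 1] E =
      (∑ j ∈ Finset.range (n + 2),
        (((Nat.factorial (n + 1) : ℚ) * (Nat.factorial (n + 2))) /
          ((Nat.factorial j) * (Nat.factorial (j + 1)) * (Nat.factorial (n + 1 - j)))) •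
          (E ^ (n + 1 - j) * Ψ j))
      + (Nat.factorial (n + 1) : ℚ) • E ^ (n + 2) := by
  rw [RiccatiIterate.iterate_deriv_eq_closedForm D hDE hΨ0 hΨ1
      (RiccatiIterate.deriv_psi_succ_of_rec D hΨrec),
    RiccatiIterate.closedForm_eq_sum_range hΨ0]
end

section
/- Let $A$ be a commutative $\mathbb{Q}$-algebra, $D$ a derivation, $E, \Lambda \in A$ with $DE = \Lambda + E^2$. For integers $n \ge 0$ define the Rankin-Cohen bracket of $E$ with itself (with both arguments of weight 2) by $[E,E]_{D,n} := \sum_{j=0}^{n} (-1)^j \frac{(2+j)_{n-j}(2+n-j)_j}{j!\,(n-j)!}\, D^j E\, D^{n-j} E$, where $(x)_m$ is the Pochhammer symbol. Define $\vartheta^{(n)} E := (1 + (-1)^n) D^{n+1} E - (n+2)[E,E]_{D,n}$. Then $\vartheta^{(n)} E$ lies in the subalgebra of $A$ generated by the elements $\Psi_0, \Psi_1, \Psi_2, \ldots$ (defined by $\Psi_0 = 0$, $\Psi_1 = \Lambda$, $\Psi_{j+1} = D\Psi_j - (2j+2)E\Psi_j + j(j+1)\Lambda\Psi_{j-1}$);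 in fact, for even $n$, $\vartheta^{(n)} E = -(n+2)\sum_{j=0}^{n} (-1)^j \binom{n+1}{n-j}\binom{n+1}{j} \Psi_j \Psi_{n-j} + 2\Psi_{n+1}$, and for odd $n$, $\vartheta^{(n)} E = 0$. -/
open Finset

/-- Pochhammer symbol `(x)_m = x(x+1)⋯(x+m-1)` for rational `x`. -/
def poch (x : ℚ) (m : ℕ) : ℚ := ∏ i ∈ Finset.range m, (x + i)

/-!
Let `F(X) = 1 + ∑ₖ Dᵏ E · X^(k+1) / (k! (k+1)!)` and `G(X) = 1 + ∑ₖ Ψₖ · X^(k+1) / (k! (k+1)!)`.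
Applying `D` coefficientwise, `F` satisfies `D F = X F''`, and because of `D E = Λ + E²` and the
recursion for `Ψ` so does `e^(EX) G`. The solutions of `D P = X P''` are determined by their first
two coefficients, hence `F = e^(EX) G`, and therefore `F(X) F(-X) = G(X) G(-X)`. Up to the factor
`(-1)ⁿ (n+1)! (n+2)!`, the coefficient of `X^(n+2)` of `F(X) F(-X)` is `ϑ⁽ⁿ⁾E` and that of
`G(X) G(-X)` is the same expression with `Dᵏ E` replaced by `Ψₖ`. This coefficient vanishes for odd
`n` because `F(X) F(-X)` is even.
-/

open PowerSeries Nat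

namespace PowerSeries

variable {A : Type*} [CommRing A]

theorem derivative_rescale (a : A) (P : A⟦X⟧) :
    d⁄dX A (rescale a P) = C a * rescale a (d⁄dX A P) := by
  ext n
  simp only [coeff_derivative, coeff_rescale, coeff_C_mul]
  ring

variable [Algebra ℚ A]

noncomputable def mapDerivation (D : Derivation ℚ A A) (P : A⟦X⟧) : A⟦X⟧ :=
  mk fun n => D (coeff n P)

@[simp]
theorem coeff_mapDerivation (D : Derivation ℚ A A) (P : A⟦X⟧) (n : ℕ) :
    coeff n (mapDerivation D P) = D (coeff n P) :=
  coeff_mk _ _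

theorem mapDerivation_mul (D : Derivation ℚ A A) (P Q : A⟦X⟧) :
    mapDerivation D (P * Q) = mapDerivation D P * Q + P * mapDerivation D Q := by
  ext n
  simp only [coeff_mapDerivation, map_add, coeff_mul, map_sum, Derivation.leibniz, smul_eq_mul,
    ← sum_add_distrib]
  exact sum_congr rfl fun _ _ => by ring

theorem mapDerivation_rescale_exp (D : Derivation ℚ A A) (a : A) :
    mapDerivation D (rescale a (exp A)) = X * C (D a) * rescale a (exp A) := by
  ext n
  rcases n with _ | n
  · simp
  · rw [mul_assoc, coeff_succ_X_mul, coeff_C_mul]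
    simp only [coeff_mapDerivation, coeff_rescale, coeff_exp, Derivation.leibniz,
      Derivation.map_algebraMap, Derivation.leibniz_pow, smul_eq_mul, nsmul_eq_mul,
      add_tsub_cancel_right]
    have hq : algebraMap ℚ A (1 / (n + 1)!) * (n + 1 : ℕ) = algebraMap ℚ A (1 / n !) := by
      rw [← map_natCast (algebraMap ℚ A), ← map_mul, factorial_succ]
      congr 1
      push_cast
      field_simp
    linear_combination (a ^ n * D a) * hq

theorem rescale_exp_mul_rescale_neg_one (a : A) :
    rescale a (exp A) * rescale (-1) (rescale a (exp A)) = 1 := by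
  rw [rescale_rescale, exp_mul_exp_eq_exp_add, mul_neg_one, add_neg_cancel]
  simp

theorem coeff_mul_rescale_neg_one_of_odd (P : A⟦X⟧) {m : ℕ} (hm : Odd m) :
    coeff m (P * rescale (-1) P) = 0 := by
  have : IsAddTorsionFree A := .of_module_rat A
  have heven : rescale (-1) (P * rescale (-1) P) = P * rescale (-1) P := by
    rw [map_mul, rescale_rescale, neg_one_mul, neg_neg, rescale_one, RingHom.id_apply, mul_comm]
  have h := congrArg (coeff m) heven
  rw [coeff_rescale, hm.neg_one_pow, neg_one_mul] at h
  exact self_eq_neg.mp h.symm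

theorem eq_of_mapDerivation_eq_X_mul_derivative_derivative {D : Derivation ℚ A A} {P Q : A⟦X⟧}
    (hP : mapDerivation D P = X * d⁄dX A (d⁄dX A P))
    (hQ : mapDerivation D Q = X * d⁄dX A (d⁄dX A Q))
    (h0 : coeff 0 P = coeff 0 Q) (h1 : coeff 1 P = coeff 1 Q) : P = Q := by
  have step : ∀ R : A⟦X⟧, mapDerivation D R = X * d⁄dX A (d⁄dX A R) → ∀ n,
      D (coeff (n + 1) R) = ((n + 2) * (n + 1) : ℚ) • coeff (n + 2) R := by
    intro R hR n
    rw [← coeff_mapDerivation, hR, coeff_succ_X_mul, coeff_derivative, coeff_derivative,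
      Algebra.smul_def]
    simp only [map_mul, map_add, map_natCast, map_ofNat, map_one, Nat.cast_add, Nat.cast_one]
    ring
  have key : ∀ n, coeff n P = coeff n Q ∧ coeff (n + 1) P = coeff (n + 1) Q := by
    intro n
    induction n with
    | zero => exact ⟨h0, h1⟩
    | succ n ih =>
      refine ⟨ih.2, smul_right_injective A (r := ((n + 2) * (n + 1) : ℚ)) (by positivity) ?_⟩
      simp only [← step P hP, ← step Q hQ, ih.2]
  ext n
  exact (key n).1

end PowerSeries

namespace RankinCohen

variable {A : Type*} [CommRing A] [Algebra ℚ A]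

structure IsPsiSequence (D : Derivation ℚ A A) (E Λ : A) (Ψ : ℕ → A) : Prop where
  zero : Ψ 0 = 0
  one : Ψ 1 = Λ
  succ_succ : ∀ j : ℕ, Ψ (j + 2) =
    (D (Ψ (j + 1)) - (2 * (j + 1 : ℕ) + 2 : ℚ) • (E * Ψ (j + 1)))
      + (((j + 1 : ℕ) * ((j + 1 : ℕ) + 1) : ℚ) • (Λ * Ψ j))

def genWeight (k : ℕ) : ℚ := 1 / (k ! * (k + 1)!)

theorem algebraMap_genWeight (k : ℕ) : algebraMap ℚ A (genWeight k) =
    ((k : A) + 1) * ((k : A) + 2) * algebraMap ℚ A (genWeight (k + 1)) := by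
  have h : genWeight k = ((k : ℚ) + 1) * ((k : ℚ) + 2) * genWeight (k + 1) := by
    simp only [genWeight, factorial_succ]
    push_cast
    field_simp
    ring
  rw [h]
  simp only [map_mul, map_add, map_natCast, map_one, map_ofNat]

theorem choose_mul_choose_eq_genWeight (i j : ℕ) :
    ((i + j : ℕ) + 2 : ℚ) * (Nat.choose (i + j + 1) j) * (Nat.choose (i + j + 1) i) =
      (i + j + 1)! * (i + j + 2)! * genWeight i * genWeight j := by
  rw [Nat.cast_choose ℚ (by omega : j ≤ i + j + 1), Nat.cast_choose ℚ (by omega : i ≤ i + j + 1),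
    show i + j + 1 - j = i + 1 by omega, show i + j + 1 - i = j + 1 by omega]
  simp only [genWeight, factorial_succ (i + j + 1), factorial_succ i, factorial_succ j]
  push_cast
  field_simp
  ring

noncomputable def genSeries (x : ℕ → A) : A⟦X⟧ :=
  mk fun
    | 0 => 1
    | k + 1 => genWeight k • x k

theorem mapDerivation_genSeries_iterate (D : Derivation ℚ A A) (E : A) :
    mapDerivation D (genSeries fun k => D^[k] E) =
      X * d⁄dX A (d⁄dX A (genSeries fun k => D^[k] E)) := by
  ext n
  rcases n with _ | k
  · simp [genSeries]
  · simp only [coeff_succ_X_mul, coeff_derivative, genSeries, coeff_mapDerivation, coeff_mk,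
      Derivation.map_smul, ← Function.iterate_succ_apply' D]
    simp only [Algebra.smul_def, algebraMap_genWeight k]
    push_cast
    ring

theorem IsPsiSequence.mapDerivation_genSeries {D : Derivation ℚ A A} {E Λ : A} {Ψ : ℕ → A}
    (hΨ : IsPsiSequence D E Λ Ψ) :
    mapDerivation D (genSeries Ψ) = X * (d⁄dX A (d⁄dX A (genSeries Ψ))
      + C (2 * E) * d⁄dX A (genSeries Ψ) - C Λ * genSeries Ψ) := by
  ext n
  rcases n with _ | _ | k
  · simp [genSeries]
  · simp only [coeff_succ_X_mul, coeff_derivative, genSeries, coeff_mapDerivation, coeff_mk,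
      Derivation.map_smul, map_add, map_sub, coeff_C_mul, hΨ.zero, hΨ.one, map_zero]
    have h : algebraMap ℚ A (genWeight 0) = 1 := by simp [genWeight]
    rw [algebraMap_genWeight] at h
    simp only [Algebra.smul_def]
    push_cast at h ⊢
    linear_combination (-Λ) * h
  · simp only [coeff_succ_X_mul, coeff_derivative, genSeries, coeff_mapDerivation, coeff_mk,
      Derivation.map_smul, map_add, map_sub, coeff_C_mul, hΨ.succ_succ k]
    simp only [Algebra.smul_def, algebraMap_genWeight k, algebraMap_genWeight (k + 1), map_mul,
      map_add, map_natCast, map_ofNat]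
    push_cast
    ring

theorem mapDerivation_rescale_exp_mul {D : Derivation ℚ A A} {E Λ : A} (hDE : D E = Λ + E ^ 2)
    {G : A⟦X⟧}
    (hG : mapDerivation D G = X * (d⁄dX A (d⁄dX A G) + C (2 * E) * d⁄dX A G - C Λ * G)) :
    mapDerivation D (rescale E (exp A) * G) =
      X * d⁄dX A (d⁄dX A (rescale E (exp A) * G)) := by
  rw [mapDerivation_mul, mapDerivation_rescale_exp, hG, hDE]
  simp only [Derivation.leibniz, derivative_rescale, derivative_exp, derivative_C, smul_eq_mul,
    map_add, map_mul, map_pow, map_ofNat]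
  ring

theorem IsPsiSequence.genSeries_iterate_eq {D : Derivation ℚ A A} {E Λ : A} {Ψ : ℕ → A}
    (hΨ : IsPsiSequence D E Λ Ψ) (hDE : D E = Λ + E ^ 2) :
    genSeries (fun k => D^[k] E) = rescale E (exp A) * genSeries Ψ := by
  refine eq_of_mapDerivation_eq_X_mul_derivative_derivative (mapDerivation_genSeries_iterate D E)
    (mapDerivation_rescale_exp_mul hDE hΨ.mapDerivation_genSeries) ?_ ?_
  · simp [genSeries, coeff_mul]
  · simp [genSeries, coeff_mul, antidiagonal_succ, hΨ.zero, genWeight]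

theorem neg_one_pow_mul_eq_smul (k : ℕ) (y : A) : (-1 : A) ^ k * y = ((-1 : ℚ) ^ k) • y := by
  simp [Algebra.smul_def]

/-- For `x k = Dᵏ E` this is `ϑ⁽ⁿ⁾E`, with the Rankin–Cohen coefficients written as products of
binomial coefficients (see `poch_mul_poch_div`). -/
def theta (x : ℕ → A) (n : ℕ) : A :=
  (1 + (-1 : ℚ) ^ n) • x (n + 1) - ((n : ℚ) + 2) • ∑ j ∈ range (n + 1),
    ((-1 : ℚ) ^ j * (Nat.choose (n + 1) (n - j)) * (Nat.choose (n + 1) j)) • (x j * x (n - j))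

theorem theta_eq_coeff (x : ℕ → A) (n : ℕ) :
    theta x n = ((-1) ^ n * (n + 1)! * (n + 2)! : ℚ) •
      coeff (n + 2) (genSeries x * rescale (-1) (genSeries x)) := by
  rw [theta, ← Nat.sum_antidiagonal_eq_sum_range_succ (fun i j =>
    ((-1 : ℚ) ^ i * (Nat.choose (n + 1) j) * (Nat.choose (n + 1) i)) • (x i * x j))]
  rw [coeff_mul, Nat.sum_antidiagonal_succ, Nat.sum_antidiagonal_succ']
  simp only [coeff_rescale, genSeries, coeff_mk, neg_one_pow_mul_eq_smul (A := A), pow_zero,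
    one_mul, mul_one]
  simp only [smul_add, smul_sum, smul_mul_assoc, mul_smul_comm, smul_smul]
  rw [sub_eq_add_neg, ← sum_neg_distrib, ← add_assoc, ← add_smul]
  congr 1
  · have hw : ((n + 1)! * (n + 2)! : ℚ) * genWeight (n + 1) = 1 := by
      simp only [genWeight]
      field_simp
    have hsq : (-1 : ℚ) ^ n * (-1) ^ n = 1 := by rw [← mul_pow]; norm_num
    congr 1
    linear_combination (-((-1) ^ n * (-1) ^ n + (-1) ^ n : ℚ)) * hw - hsq
  · refine sum_congr rfl fun ⟨i, j⟩ hij => ?_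
    obtain rfl : i + j = n := mem_antidiagonal.mp hij
    rw [← neg_smul]
    congr 1
    have hsq : (-1 : ℚ) ^ j * (-1) ^ j = 1 := by rw [← mul_pow]; norm_num
    linear_combination (-(-1) ^ i : ℚ) * choose_mul_choose_eq_genWeight i j +
      ((-1) ^ i * (i + j + 1)! * (i + j + 2)! * genWeight i * genWeight j : ℚ) * hsq

theorem theta_eq_zero_of_odd (x : ℕ → A) {n : ℕ} (hn : Odd n) : theta x n = 0 := by
  rw [theta_eq_coeff, coeff_mul_rescale_neg_one_of_odd _ (hn.add_even even_two), smul_zero]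

theorem theta_mem_adjoin (x : ℕ → A) (n : ℕ) : theta x n ∈ Algebra.adjoin ℚ (Set.range x) := by
  have hx : ∀ k, x k ∈ Algebra.adjoin ℚ (Set.range x) :=
    fun k => Algebra.subset_adjoin (Set.mem_range_self k)
  exact sub_mem (Subalgebra.smul_mem _ (hx _) _) (Subalgebra.smul_mem _
    (sum_mem fun j _ => Subalgebra.smul_mem _ (mul_mem (hx j) (hx (n - j))) _) _)

theorem IsPsiSequence.theta_iterate_eq {D : Derivation ℚ A A} {E Λ : A} {Ψ : ℕ → A}
    (hΨ : IsPsiSequence D E Λ Ψ) (hDE : D E = Λ + E ^ 2) (n : ℕ) :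
    theta (fun k => D^[k] E) n = theta Ψ n := by
  rw [theta_eq_coeff, theta_eq_coeff, hΨ.genSeries_iterate_eq hDE, map_mul (rescale (-1)),
    mul_mul_mul_comm, rescale_exp_mul_rescale_neg_one, one_mul]

end RankinCohen

theorem poch_natCast_add_one (a b : ℕ) : poch (a + 1) b = b ! * (a + b).choose b := by
  rw [poch, ← Nat.cast_mul, ← ascFactorial_eq_factorial_mul_choose, ascFactorial_eq_prod_range]
  push_cast
  rfl

theorem poch_mul_poch_div {n j : ℕ} (hj : j ≤ n) :
    poch (2 + j) (n - j) * poch (2 + (n : ℚ) - j) j / (j ! * (n - j)!) =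
      (Nat.choose (n + 1) (n - j)) * (Nat.choose (n + 1) j) := by
  obtain ⟨k, rfl⟩ := Nat.exists_eq_add_of_le hj
  have h1 : (2 + j : ℚ) = ((j + 1 : ℕ) : ℚ) + 1 := by push_cast; ring
  have h2 : (2 + ((j + k : ℕ) : ℚ) - j) = ((k + 1 : ℕ) : ℚ) + 1 := by push_cast; ring
  rw [h1, h2, add_tsub_cancel_left, poch_natCast_add_one, poch_natCast_add_one,
    show j + 1 + k = j + k + 1 by omega, show k + 1 + j = j + k + 1 by omega]
  field_simp

theorem stmt_5 {A : Type*} [CommRing A] [Algebra ℚ A]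
    (D : Derivation ℚ A A) (E Λ : A)
    (hDE : D E = Λ + E ^ 2)
    (Ψ : ℕ → A)
    (hΨ0 : Ψ 0 = 0)
    (hΨ1 : Ψ 1 = Λ)
    (hΨrec : ∀ j : ℕ, Ψ (j + 2) =
      (D (Ψ (j + 1)) - (2 * (j + 1 : ℕ) + 2 : ℚ) • (E * Ψ (j + 1)))
        + (((j + 1 : ℕ) * ((j + 1 : ℕ) + 1) : ℚ) • (Λ * Ψ j)))
    (n : ℕ)
    -- the `n`-th Rankin–Cohen bracket of `E` with itself (both of weight 2)
    (bracket : A)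
    (hbracket : bracket = ∑ j ∈ Finset.range (n + 1),
      ((-1 : ℚ) ^ j * (poch (2 + j) (n - j) * poch (2 + (n : ℚ) - j) j /
        ((Nat.factorial j) * (Nat.factorial (n - j))))) •
        ((⇑D)^[j] E * (⇑D)^[n - j] E))
    (θ : A)
    (hθ : θ = ((1 + (-1 : ℚ) ^ n)) • (⇑D)^[n + 1] E - ((n : ℚ) + 2) • bracket) :
    θ ∈ Algebra.adjoin ℚ (Set.range Ψ) ∧
    (Even n → θ =
      -(((n : ℚ) + 2) • ∑ j ∈ Finset.range (n + 1),
        ((-1 : ℚ) ^ j * (Nat.choose (n + 1) (n - j)) * (Nat.choose (n + 1) j)) •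
          (Ψ j * Ψ (n - j)))
      + (2 : ℚ) • Ψ (n + 1)) ∧
    (Odd n → θ = 0) := by
  have hθ_theta : θ = RankinCohen.theta Ψ n := by
    rw [← (RankinCohen.IsPsiSequence.mk hΨ0 hΨ1 hΨrec).theta_iterate_eq hDE, hθ, hbracket,
      RankinCohen.theta]
    congr 2
    refine sum_congr rfl fun j hj => ?_
    rw [mul_assoc, poch_mul_poch_div (Nat.lt_succ_iff.mp (mem_range.mp hj))]
  subst hθ_theta
  refine ⟨RankinCohen.theta_mem_adjoin Ψ n, fun hn => ?_, RankinCohen.theta_eq_zero_of_odd Ψ⟩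
  rw [RankinCohen.theta, hn.neg_one_pow, one_add_one_eq_two, sub_eq_neg_add]
end

section
/- Exponential conjugation identity for Cohen-Kuznetsov series (positive weight case): let $A$ be a commutative $\mathbb{Q}$-algebra, $D$ a derivation, $E, \Lambda \in A$ with $DE = \Lambda + E^2$, and let $f \in A$ have weight $k$, a positive rational that is not a non-positive integer. In the formal power series ring $A[[X]]$, define $CK_D(f; X) := \sum_{n \ge 0} \frac{D^n f}{n!\,\Gamma(k+n)} X^n$ and $CK_{\partial}(f; X) := \sum_{n \ge 0} \frac{\partial_{(n)} f}{n!\,\Gamma(k+n)} X^n$ (where $\Gamma(k+n)$ is realized as $(k)_n \Gamma(k)$, i.e., one may normalize to coefficients $\frac{1}{n!\,(k)_n}$ after dividing by $\Gamma(k)$). Then $e^{-EX}\, CK_D(f; X) = CK_{\partial}(f; X)$, where $e^{-EX} = \sum_{j \ge 0} \frac{(-E)^j}{j!} X^j$ and $\partial_{(n)}$ denotes the iterated Serre-type derivative of $f$ ($\partial_{(0)} f = f$, $\partial_{(1)} f = Df - kEf$, $\partial_{(n+1)} f = D(\partial_{(n)} f) - (k+2n)E\partial_{(n)} f + n(n+k-1)\Lambda\partial_{(n-1)}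 f$). Equivalently, for every $n \ge 0$: $\sum_{j=0}^{n} \frac{(-E)^{n-j}}{(n-j)!} \cdot \frac{D^j f}{j!\,(k)_j} = \frac{\partial_{(n)} f}{n!\,(k)_n}$. -/
/-!
Write the left side as the Cauchy product `T n = ∑_{i+j=n} a i * b j` of the coefficients
`a i = (-E)^i / i!` of `e^{-EX}` and `b j = D^j f / (j! (k)_j)` of `CK_D(f; X)`.
From `D (a (i+1)) = -(Λ + E²) a i`, `-E * a i = (i+1) a (i+1)` and `D (b j) = (j+1)(k+j) b (j+1)`,
every term of `D T(n+1) - (k+2n+2) E T(n+1) + Λ T n` becomes a multiple of some `a i * b j` with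
`i + j = n + 2`, and the multipliers add up to `j(k+j-1) + (k+2n+2) i - i(i-1) = (n+2)(k+n+1)`.
So `n! (k)_n T n` obeys the recurrence defining `∂_{(n)} f`, with the same initial values.
-/

open Finset

open scoped Nat

lemma poch_succ (x : ℚ) (n : ℕ) : poch x (n + 1) = poch x n * (x + n) := prod_range_succ _ _

lemma poch_ne_zero {k : ℚ} (hk : ∀ n : ℕ, k + n ≠ 0) (m : ℕ) : poch k m ≠ 0 :=
  prod_ne_zero_iff.mpr fun i _ => hk i

section

variable {A : Type*} [CommRing A] [Algebra ℚ A]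

def expCoeff (x : A) (i : ℕ) : A := (i ! : ℚ)⁻¹ • x ^ i

lemma mul_expCoeff (x : A) (i : ℕ) :
    x * expCoeff x i = ((i + 1 : ℕ) : ℚ) • expCoeff x (i + 1) := by
  have : ((i + 1 : ℕ) : ℚ) * ((i + 1)! : ℚ)⁻¹ = (i ! : ℚ)⁻¹ := by
    rw [Nat.factorial_succ]; push_cast; field_simp
  rw [expCoeff, expCoeff, smul_smul, this, mul_smul_comm, pow_succ']

lemma derivation_expCoeff_zero (D : Derivation ℚ A A) (x : A) : D (expCoeff x 0) = 0 := by
  simp [expCoeff]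

lemma derivation_expCoeff_succ (D : Derivation ℚ A A) (x : A) (i : ℕ) :
    D (expCoeff x (i + 1)) = D x * expCoeff x i := by
  have : ((i + 1)! : ℚ)⁻¹ * ((i + 1 : ℕ) : ℚ) = (i ! : ℚ)⁻¹ := by
    rw [Nat.factorial_succ]; push_cast; field_simp
  rw [expCoeff, expCoeff, D.map_smul, D.leibniz_pow, add_tsub_cancel_right,
    ← Nat.cast_smul_eq_nsmul ℚ, smul_smul, this, smul_eq_mul, mul_smul_comm, mul_comm]

def ckCoeff (D : Derivation ℚ A A) (f : A) (k : ℚ) (j : ℕ) : A :=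
  ((j ! : ℚ) * poch k j)⁻¹ • D^[j] f

lemma derivation_ckCoeff (D : Derivation ℚ A A) (f : A) {k : ℚ} {j : ℕ} (hk : k + j ≠ 0) :
    D (ckCoeff D f k j) = (((j + 1 : ℕ) : ℚ) * (k + j)) • ckCoeff D f k (j + 1) := by
  have : ((j + 1 : ℕ) : ℚ) * (k + j) * (((j + 1)! : ℚ) * poch k (j + 1))⁻¹
      = ((j ! : ℚ) * poch k j)⁻¹ := by
    rw [Nat.factorial_succ, poch_succ]; push_cast; field_simp
  rw [ckCoeff, ckCoeff, D.map_smul, smul_smul, this, Function.iterate_succ_apply']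

def expCKCoeff (D : Derivation ℚ A A) (E f : A) (k : ℚ) (n : ℕ) : A :=
  ∑ p ∈ antidiagonal n, expCoeff (-E) p.1 * ckCoeff D f k p.2

variable (D : Derivation ℚ A A) (E f : A) (k : ℚ)

lemma neg_mul_expCKCoeff (n : ℕ) :
    -E * expCKCoeff D E f k n = ∑ p ∈ antidiagonal (n + 1),
      (p.1 : ℚ) • (expCoeff (-E) p.1 * ckCoeff D f k p.2) := by
  rw [Nat.sum_antidiagonal_succ, expCKCoeff, mul_sum]
  simp only [Nat.cast_zero, zero_smul, zero_add]
  refine sum_congr rfl fun p _ => ?_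
  rw [← mul_assoc, mul_expCoeff, smul_mul_assoc]

lemma sq_mul_expCKCoeff (n : ℕ) :
    E ^ 2 * expCKCoeff D E f k n = ∑ p ∈ antidiagonal (n + 2),
      ((p.1 : ℚ) * (p.1 - 1)) • (expCoeff (-E) p.1 * ckCoeff D f k p.2) := by
  rw [Nat.sum_antidiagonal_succ, Nat.sum_antidiagonal_succ, expCKCoeff, mul_sum]
  simp only [Nat.cast_zero, zero_mul, zero_smul, zero_add, Nat.cast_one, sub_self, mul_zero]
  refine sum_congr rfl fun p _ => ?_
  rw [← neg_sq, sq, mul_assoc, ← mul_assoc (-E) (expCoeff _ _), mul_expCoeff, smul_mul_assoc,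
    mul_smul_comm, ← mul_assoc, mul_expCoeff, smul_mul_assoc, smul_smul]
  congr 1
  push_cast
  ring

lemma derivation_expCKCoeff_succ {Λ : A} (hDE : D E = Λ + E ^ 2) (hk : ∀ n : ℕ, k + n ≠ 0)
    (n : ℕ) :
    D (expCKCoeff D E f k (n + 1)) = -(Λ * expCKCoeff D E f k n) - E ^ 2 * expCKCoeff D E f k n
      + ∑ p ∈ antidiagonal (n + 2),
          ((p.2 : ℚ) * (k + p.2 - 1)) • (expCoeff (-E) p.1 * ckCoeff D f k p.2) := by
  have hexp : ∑ p ∈ antidiagonal (n + 1), D (expCoeff (-E) p.1) * ckCoeff D f k p.2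
      = -(Λ * expCKCoeff D E f k n) - E ^ 2 * expCKCoeff D E f k n := by
    rw [Nat.sum_antidiagonal_succ]
    dsimp only
    rw [derivation_expCoeff_zero, zero_mul, zero_add, ← neg_mul, ← sub_mul, expCKCoeff, mul_sum]
    refine sum_congr rfl fun p _ => ?_
    rw [derivation_expCoeff_succ, map_neg, hDE, neg_add', mul_assoc]
  have hck : ∑ p ∈ antidiagonal (n + 1), expCoeff (-E) p.1 * D (ckCoeff D f k p.2)
      = ∑ p ∈ antidiagonal (n + 2),
          ((p.2 : ℚ) * (k + p.2 - 1)) • (expCoeff (-E) p.1 * ckCoeff D f k p.2) := by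
    rw [Nat.sum_antidiagonal_succ' (n := n + 1)]
    simp only [Nat.cast_zero, zero_mul, zero_smul, zero_add]
    refine sum_congr rfl fun p _ => ?_
    rw [derivation_ckCoeff D f (hk p.2), mul_smul_comm]
    congr 2
    push_cast
    ring
  rw [expCKCoeff, map_sum, ← hexp, ← hck, ← sum_add_distrib]
  refine sum_congr rfl fun p _ => ?_
  rw [D.leibniz, smul_eq_mul, smul_eq_mul, add_comm, mul_comm]

lemma expCKCoeff_recurrence {Λ : A} (hDE : D E = Λ + E ^ 2) (hk : ∀ n : ℕ, k + n ≠ 0) (n : ℕ) :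
    (((n + 2 : ℕ) : ℚ) * (k + (n + 1 : ℕ))) • expCKCoeff D E f k (n + 2)
      = D (expCKCoeff D E f k (n + 1)) - (k + 2 * (n + 1 : ℕ)) • (E * expCKCoeff D E f k (n + 1))
        + Λ * expCKCoeff D E f k n := by
  set c : ℚ := k + 2 * (n + 1 : ℕ)
  have hE : -(c • (E * expCKCoeff D E f k (n + 1))) = ∑ p ∈ antidiagonal (n + 2),
      (c * p.1) • (expCoeff (-E) p.1 * ckCoeff D f k p.2) := by
    simp only [← smul_neg, ← neg_mul, neg_mul_expCKCoeff, smul_sum, smul_smul]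
  calc (((n + 2 : ℕ) : ℚ) * (k + (n + 1 : ℕ))) • expCKCoeff D E f k (n + 2)
      = ∑ p ∈ antidiagonal (n + 2),
          ((p.2 : ℚ) * (k + p.2 - 1) + c * p.1 - p.1 * (p.1 - 1)) •
            (expCoeff (-E) p.1 * ckCoeff D f k p.2) := by
        rw [expCKCoeff, smul_sum]
        refine sum_congr rfl fun p hmem => ?_
        have hp : (p.1 : ℚ) + p.2 = n + 2 := by exact_mod_cast mem_antidiagonal.mp hmem
        congr 1
        simp only [c]
        push_cast
        linear_combination (-(k + n + 1 - p.1 + p.2)) * hp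
    _ = ∑ p ∈ antidiagonal (n + 2),
            ((p.2 : ℚ) * (k + p.2 - 1)) • (expCoeff (-E) p.1 * ckCoeff D f k p.2)
          + ∑ p ∈ antidiagonal (n + 2), (c * p.1) • (expCoeff (-E) p.1 * ckCoeff D f k p.2)
          - ∑ p ∈ antidiagonal (n + 2),
            ((p.1 : ℚ) * (p.1 - 1)) • (expCoeff (-E) p.1 * ckCoeff D f k p.2) := by
        simp only [add_smul, sub_smul, sum_add_distrib, sum_sub_distrib]
    _ = _ := by
        rw [derivation_expCKCoeff_succ D E f k hDE hk, sq_mul_expCKCoeff, ← hE]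
        abel

lemma sum_range_eq_expCKCoeff (n : ℕ) :
    ∑ j ∈ range (n + 1), ((1 : ℚ) / ((n - j)! * j ! * poch k j)) • ((-E) ^ (n - j) * D^[j] f)
      = expCKCoeff D E f k n := by
  rw [expCKCoeff, ← Nat.sum_antidiagonal_swap, Nat.sum_antidiagonal_eq_sum_range_succ_mk]
  refine sum_congr rfl fun j _ => ?_
  rw [expCoeff, ckCoeff, smul_mul_smul_comm, ← mul_inv, one_div, mul_assoc]
  rfl

lemma eq_smul_expCKCoeff {Λ : A} (hDE : D E = Λ + E ^ 2) (hk : ∀ n : ℕ, k + n ≠ 0)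
    (S : ℕ → A) (hS0 : S 0 = f) (hS1 : S 1 = D f - k • (E * f))
    (hSrec : ∀ m : ℕ, S (m + 2) =
      (D (S (m + 1)) - (k + 2 * (m + 1 : ℕ)) • (E * S (m + 1)))
        + (((m + 1 : ℕ) * ((m + 1 : ℕ) + k - 1)) • (Λ * S m)))
    (n : ℕ) : S n = ((n ! : ℚ) * poch k n) • expCKCoeff D E f k n := by
  induction n using Nat.twoStepInduction with
  | zero => simp [hS0, expCKCoeff, expCoeff, ckCoeff, poch]
  | one =>
    have hk0 : k ≠ 0 := by simpa using hk 0
    simp [hS1, expCKCoeff, expCoeff, ckCoeff, poch, Nat.sum_antidiagonal_succ, smul_add, hk0,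
      sub_eq_add_neg]
  | more n ih0 ih1 =>
    have hpoch : ((n + 1)! : ℚ) * poch k (n + 1)
        = (((n + 1 : ℕ) : ℚ) * ((n + 1 : ℕ) + k - 1)) * ((n ! : ℚ) * poch k n) := by
      rw [Nat.factorial_succ, poch_succ]; push_cast; ring
    calc S (n + 2)
        = ((n + 1)! * poch k (n + 1) : ℚ) • (D (expCKCoeff D E f k (n + 1))
            - (k + 2 * (n + 1 : ℕ)) • (E * expCKCoeff D E f k (n + 1))
            + Λ * expCKCoeff D E f k n) := by
          rw [hSrec, ih0, ih1, D.map_smul, mul_smul_comm, mul_smul_comm, hpoch]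
          module
      _ = ((n + 2)! * poch k (n + 2) : ℚ) • expCKCoeff D E f k (n + 2) := by
          rw [← expCKCoeff_recurrence D E f k hDE hk, smul_smul, Nat.factorial_succ (n + 1),
            poch_succ _ (n + 1)]
          congr 1
          push_cast
          ring

end

/-- Coefficientwise form of the identity `e^{-EX} CK_D(f;X) = CK_∂(f;X)` for the
Cohen–Kuznetsov series of an element `f` of weight `k` (with `k + n ≠ 0` for all `n ≥ 0`). -/
theorem stmt_15 {A : Type*} [CommRing A] [Algebra ℚ A]
    (D : Derivation ℚ A A) (E Λ f : A) (k : ℚ)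
    (hDE : D E = Λ + E ^ 2)
    (hk : ∀ n : ℕ, k + (n : ℚ) ≠ 0)
    (S : ℕ → A)
    (hS0 : S 0 = f)
    (hS1 : S 1 = D f - k • (E * f))
    (hSrec : ∀ m : ℕ, S (m + 2) =
      (D (S (m + 1)) - (k + 2 * (m + 1 : ℕ)) • (E * S (m + 1)))
        + (((m + 1 : ℕ) * ((m + 1 : ℕ) + k - 1)) • (Λ * S m)))
    (n : ℕ) :
    ∑ j ∈ Finset.range (n + 1),
      ((1 : ℚ) / ((Nat.factorial (n - j)) * (Nat.factorial j) * poch k j)) •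
        ((-E) ^ (n - j) * (⇑D)^[j] f)
    = ((1 : ℚ) / ((Nat.factorial n) * poch k n)) • S n := by
  have hc : (n ! * poch k n : ℚ) ≠ 0 :=
    mul_ne_zero (Nat.cast_ne_zero.mpr n.factorial_ne_zero) (poch_ne_zero hk n)
  rw [sum_range_eq_expCKCoeff, eq_smul_expCKCoeff D E f k hDE hk S hS0 hS1 hSrec n, smul_smul,
    one_div, inv_mul_cancel₀ hc, one_smul]
end
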